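/- Let U ⊆ ℂ be open, y : U → ℂ holomorphic, x_1 ∈ U, ρ > 0 with the closed disk of radius ρ about x_1 contained in U, and M = max_{t ∈ [0, 2π]} |y(x_1 + ρ e^{it})|. Then for all x_2 with |x_2 − x_1| < ρ, |y(x_1) − y(x_2)| ≤ (M/(ρ(ρ − |x_2 − x_1|))) |x_2 − x_1|^2 + |y'(x_1)| |x_2 − x_1|. -/

import Mathlib

/-!
Expand `y` in its Taylor series at `x₁`. By Cauchy's estimates the `n`-th Taylor coefficient has
norm at most `M / ρ ^ n`, so with `r = ‖x₂ - x₁‖` the terms of order `≥ 2` are dominated by the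
geometric series `M (r / ρ) ^ 2 ∑ (r / ρ) ^ n = M r ^ 2 / (ρ (ρ - r))`; the first-order term
contributes `‖y' x₁‖ r`.
-/

open Real Metric Nat

namespace Complex

variable {E : Type*} [NormedAddCommGroup E] [NormedSpace ℂ E] [CompleteSpace E]

theorem norm_inv_factorial_smul_iteratedDeriv_le_of_forall_mem_sphere_norm_le {f : ℂ → E}
    {c : ℂ} {R C : ℝ} (n : ℕ) (hR : 0 < R) (hf : DiffContOnCl ℂ f (ball c R))
    (hC : ∀ z ∈ sphere c R, ‖f z‖ ≤ C) :
    ‖(n ! : ℂ)⁻¹ • iteratedDeriv n f c‖ ≤ C / R ^ n := by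
  rw [norm_smul, norm_inv, norm_natCast, inv_mul_le_iff₀ (by positivity), ← mul_div_assoc]
  exact norm_iteratedDeriv_le_of_forall_mem_sphere_norm_le n hR hf hC

theorem norm_sub_sub_smul_deriv_le_of_forall_mem_sphere_norm_le {f : ℂ → E} {c z : ℂ}
    {R C : ℝ} (hf : DiffContOnCl ℂ f (ball c R)) (hC : ∀ w ∈ sphere c R, ‖f w‖ ≤ C)
    (hz : ‖z - c‖ < R) :
    ‖f z - f c - (z - c) • deriv f c‖ ≤ C / (R * (R - ‖z - c‖)) * ‖z - c‖ ^ 2 := by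
  set r := ‖z - c‖
  have hR : 0 < R := (norm_nonneg _).trans_lt hz
  have htaylor := hasSum_taylorSeries_on_ball hf.differentiableOn (mem_ball_iff_norm.2 hz)
  have htail : HasSum (fun n ↦ ((n + 2)! : ℂ)⁻¹ • (z - c) ^ (n + 2) • iteratedDeriv (n + 2) f c)
      (f z - f c - (z - c) • deriv f c) := by
    convert (hasSum_nat_add_iff' 2).mpr htaylor using 1
    simp [Finset.sum_range_succ, sub_sub]
  have hgeom : HasSum (fun n : ℕ ↦ C * r ^ 2 / R ^ 2 * (r / R) ^ n)
      (C * r ^ 2 / R ^ 2 * (1 - r / R)⁻¹) :=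
    (hasSum_geometric_of_lt_one (by positivity) ((div_lt_one hR).2 hz)).mul_left _
  calc ‖f z - f c - (z - c) • deriv f c‖ ≤ C * r ^ 2 / R ^ 2 * (1 - r / R)⁻¹ := by
        refine htail.norm_le_of_bounded hgeom fun n ↦ ?_
        rw [smul_comm, norm_smul, norm_pow]
        calc r ^ (n + 2) * ‖((n + 2)! : ℂ)⁻¹ • iteratedDeriv (n + 2) f c‖
            ≤ r ^ (n + 2) * (C / R ^ (n + 2)) := by
              gcongr
              exact norm_inv_factorial_smul_iteratedDeriv_le_of_forall_mem_sphere_norm_le _ hR hf hC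
          _ = C * r ^ 2 / R ^ 2 * (r / R) ^ n := by
              rw [div_pow, pow_add]
              field_simp
              ring
    _ = C / (R * (R - r)) * r ^ 2 := by
        have : R - r ≠ 0 := by linarith
        field_simp

theorem sphere_subset_image_Icc (c : ℂ) (ρ : ℝ) :
    sphere c |ρ| ⊆ (fun t : ℝ ↦ c + ρ * exp (I * t)) '' Set.Icc 0 (2 * π) := by
  rw [← image_circleMap_Ioc]
  rintro _ ⟨t, ht, rfl⟩
  exact ⟨t, Set.Ioc_subset_Icc_self ht, by simp [circleMap, mul_comm I]⟩

end Complex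

theorem holomorphic_continuity_estimate_general (U : Set ℂ) (y : ℂ → ℂ)
    (hy : DifferentiableOn ℂ y U) (x₁ : ℂ) (ρ : ℝ)
    (hball : Metric.closedBall x₁ ρ ⊆ U) (M : ℝ)
    (hM : IsGreatest {m : ℝ | ∃ t ∈ Set.Icc (0 : ℝ) (2 * π),
      m = ‖y (x₁ + ρ * Complex.exp (Complex.I * t))‖} M) :
    ∀ x₂ : ℂ, ‖x₂ - x₁‖ < ρ →
      ‖y x₁ - y x₂‖ ≤ M / (ρ * (ρ - ‖x₂ - x₁‖)) * ‖x₂ - x₁‖ ^ 2 +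
        ‖deriv y x₁‖ * ‖x₂ - x₁‖ := by
  intro x₂ hx₂
  have hρ : 0 < ρ := (norm_nonneg _).trans_lt hx₂
  have hsphere : ∀ w ∈ Metric.sphere x₁ ρ, ‖y w‖ ≤ M := by
    rw [← abs_of_pos hρ]
    rintro _ hw
    obtain ⟨t, ht, rfl⟩ := Complex.sphere_subset_image_Icc x₁ ρ hw
    exact hM.2 ⟨t, ht, rfl⟩
  have hremainder := Complex.norm_sub_sub_smul_deriv_le_of_forall_mem_sphere_norm_le
    (hy.diffContOnCl_ball hball) hsphere hx₂
  calc ‖y x₁ - y x₂‖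
      = ‖(y x₂ - y x₁ - (x₂ - x₁) • deriv y x₁) + (x₂ - x₁) • deriv y x₁‖ := by
        rw [← norm_neg]; congr 1; abel
    _ ≤ ‖y x₂ - y x₁ - (x₂ - x₁) • deriv y x₁‖ + ‖(x₂ - x₁) • deriv y x₁‖ := norm_add_le _ _
    _ ≤ M / (ρ * (ρ - ‖x₂ - x₁‖)) * ‖x₂ - x₁‖ ^ 2 + ‖deriv y x₁‖ * ‖x₂ - x₁‖ := by
        rw [norm_smul, mul_comm ‖x₂ - x₁‖]
        gcongr

/-- Quantitative continuity estimate for a holomorphic function: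
with `M` the maximum of `‖y‖` on the circle of radius `ρ` about `x₁`, for `‖x₂ − x₁‖ < ρ`,
`‖y x₁ − y x₂‖ ≤ (M/(ρ(ρ − ‖x₂ − x₁‖))) ‖x₂ − x₁‖² + ‖y'(x₁)‖ ‖x₂ − x₁‖`. -/
theorem holomorphic_continuity_estimate (U : Set ℂ) (hU : IsOpen U) (y : ℂ → ℂ)
    (hy : DifferentiableOn ℂ y U) (x₁ : ℂ) (ρ : ℝ) (hρ : 0 < ρ)
    (hball : Metric.closedBall x₁ ρ ⊆ U) (M : ℝ)
    (hM : IsGreatest {m : ℝ | ∃ t ∈ Set.Icc (0 : ℝ) (2 * π),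
      m = ‖y (x₁ + ρ * Complex.exp (Complex.I * t))‖} M) :
    ∀ x₂ : ℂ, ‖x₂ - x₁‖ < ρ →
      ‖y x₁ - y x₂‖ ≤ M / (ρ * (ρ - ‖x₂ - x₁‖)) * ‖x₂ - x₁‖ ^ 2 +
        ‖deriv y x₁‖ * ‖x₂ - x₁‖ :=
  holomorphic_continuity_estimate_general U y hy x₁ ρ hball M hM
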